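/- Let M be a nonnegative irreducible real n×n matrix with n ≥ 1 and let B be a complex n×n matrix such that |B_{ij}| ≤ M_{ij} for all indices i, j. Then ρ(B) ≤ ρ(M). -/

import Mathlib

open Matrix Polynomial

/-- The spectral radius of a complex square matrix: the maximum modulus of the roots
of its characteristic polynomial. -/
noncomputable def specRadC {n : ℕ} (B : Matrix (Fin n) (Fin n) ℂ) : ℝ :=
  sSup {r : ℝ | ∃ μ : ℂ, μ ∈ B.charpoly.roots ∧ ‖μ‖ = r}

/-- The spectral radius of a real square matrix: the spectral radius of the matrix
regarded as a complex matrix. -/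
noncomputable def specRad {n : ℕ} (A : Matrix (Fin n) (Fin n) ℝ) : ℝ :=
  specRadC (A.map (Complex.ofReal : ℝ → ℂ))

/-! Both spectral radii are read off Gelfand's formula `ρ(X) = lim ‖X ^ k‖ ^ (1 / k)` for the
`ℓ∞` operator norm. Entrywise, `‖(B ^ k) i j‖ ≤ (M ^ k) i j` by induction on `k`, and the `ℓ∞`
operator norm is monotone in the moduli of the entries, so `‖B ^ k‖ ≤ ‖M ^ k‖` for every `k`. -/

attribute [local instance] Matrix.linftyOpSeminormedAddCommGroup Matrix.linftyOpNormedRing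
  Matrix.linftyOpNormedAlgebra

theorem spectralRadius_le_of_forall_nnnorm_pow_le {A : Type*} [NormedRing A]
    [NormedAlgebra ℂ A] [CompleteSpace A] {a b : A} (h : ∀ k : ℕ, ‖a ^ k‖₊ ≤ ‖b ^ k‖₊) :
    spectralRadius ℂ a ≤ spectralRadius ℂ b :=
  le_of_tendsto_of_tendsto' (spectrum.pow_nnnorm_pow_one_div_tendsto_nhds_spectralRadius a)
    (spectrum.pow_nnnorm_pow_one_div_tendsto_nhds_spectralRadius b) fun k =>
      ENNReal.rpow_le_rpow (by exact_mod_cast h k) (by positivity)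

namespace Matrix

theorem norm_pow_apply_le_of_norm_apply_le {ι R : Type*} [Fintype ι] [DecidableEq ι]
    [SeminormedRing R] [NormOneClass R] {B : Matrix ι ι R} {M : Matrix ι ι ℝ}
    (hB : ∀ i j, ‖B i j‖ ≤ M i j) (k : ℕ) (i j : ι) : ‖(B ^ k) i j‖ ≤ (M ^ k) i j := by
  induction k generalizing j with
  | zero => by_cases h : i = j <;> simp [h]
  | succ k ih =>
    rw [pow_succ, pow_succ, mul_apply, mul_apply]
    calc ‖∑ l, (B ^ k) i l * B l j‖ ≤ ∑ l, ‖(B ^ k) i l‖ * ‖B l j‖ :=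
          (norm_sum_le _ _).trans (Finset.sum_le_sum fun l _ => norm_mul_le _ _)
      _ ≤ ∑ l, (M ^ k) i l * M l j :=
          Finset.sum_le_sum fun l _ =>
            mul_le_mul (ih l) (hB l j) (norm_nonneg _) ((norm_nonneg _).trans (ih l))

theorem linfty_opNNNorm_le_of_norm_apply_le {m n α β : Type*} [Fintype m] [Fintype n]
    [SeminormedAddCommGroup α] [SeminormedAddCommGroup β] {X : Matrix m n α} {Y : Matrix m n β}
    (h : ∀ i j, ‖X i j‖ ≤ ‖Y i j‖) : ‖X‖₊ ≤ ‖Y‖₊ := by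
  rw [linfty_opNNNorm_def, linfty_opNNNorm_def]
  exact Finset.sup_mono_fun fun i _ => Finset.sum_le_sum fun j _ => h i j

end Matrix

theorem specRadC_nonneg {n : ℕ} (B : Matrix (Fin n) (Fin n) ℂ) : 0 ≤ specRadC B :=
  Real.sSup_nonneg fun _ ⟨μ, _, hμ⟩ => hμ ▸ norm_nonneg μ

theorem spectralRadius_eq_ofReal_specRadC {n : ℕ} (B : Matrix (Fin n) (Fin n) ℂ) :
    spectralRadius ℂ B = ENNReal.ofReal (specRadC B) := by
  set S := {r : ℝ | ∃ μ : ℂ, μ ∈ B.charpoly.roots ∧ ‖μ‖ = r}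
  have mem_roots_iff (μ : ℂ) : μ ∈ B.charpoly.roots ↔ μ ∈ spectrum ℂ B := by
    rw [mem_roots B.charpoly_monic.ne_zero, mem_spectrum_iff_isRoot_charpoly]
  have hS : S.Finite := (B.charpoly.roots.toFinset.finite_toSet.image (‖·‖)).subset
    fun _ ⟨μ, hμ, hr⟩ => ⟨μ, Multiset.mem_toFinset.2 hμ, hr⟩
  apply le_antisymm
  · refine iSup₂_le fun μ hμ => ?_
    rw [← enorm_eq_nnnorm, ← ofReal_norm]
    exact ENNReal.ofReal_le_ofReal (le_csSup hS.bddAbove ⟨μ, (mem_roots_iff μ).2 hμ, rfl⟩)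
  · rcases S.eq_empty_or_nonempty with hempty | hne
    · change ENNReal.ofReal (sSup S) ≤ _
      rw [hempty, Real.sSup_empty, ENNReal.ofReal_zero]
      exact zero_le
    · obtain ⟨μ, hμ, hμS⟩ := hne.csSup_mem hS
      rw [specRadC, ← hμS, ofReal_norm, enorm_eq_nnnorm]
      exact le_iSup₂ (f := fun μ (_ : μ ∈ spectrum ℂ B) => (‖μ‖₊ : ENNReal)) μ
        ((mem_roots_iff μ).1 hμ)

theorem specRad_mono_of_abs_le_general {n : ℕ}
    (M : Matrix (Fin n) (Fin n) ℝ)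
    (B : Matrix (Fin n) (Fin n) ℂ)
    (hB : ∀ i j, ‖B i j‖ ≤ M i j) :
    specRadC B ≤ specRad M := by
  have hpow (k : ℕ) : ‖B ^ k‖₊ ≤ ‖M.map (Complex.ofReal : ℝ → ℂ) ^ k‖₊ := by
    change ‖B ^ k‖₊ ≤ ‖M.map Complex.ofRealHom ^ k‖₊
    rw [← Matrix.map_pow M Complex.ofRealHom]
    refine linfty_opNNNorm_le_of_norm_apply_le fun i j => ?_
    simpa using (norm_pow_apply_le_of_norm_apply_le hB k i j).trans (le_abs_self _)
  have hρ := spectralRadius_le_of_forall_nnnorm_pow_le hpow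
  rw [spectralRadius_eq_ofReal_specRadC, spectralRadius_eq_ofReal_specRadC] at hρ
  exact (ENNReal.ofReal_le_ofReal_iff (specRadC_nonneg _)).1 hρ

theorem specRad_mono_of_abs_le {n : ℕ} (hn : 1 ≤ n)
    (M : Matrix (Fin n) (Fin n) ℝ)
    (hM : ∀ i j, 0 ≤ M i j)
    (hirr : ∀ i j, ∃ k : ℕ, 1 ≤ k ∧ 0 < (M ^ k) i j)
    (B : Matrix (Fin n) (Fin n) ℂ)
    (hB : ∀ i j, ‖B i j‖ ≤ M i j) :
    specRadC B ≤ specRad M :=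
  specRad_mono_of_abs_le_general M B hB
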